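/- arXiv:1402.1587 — 2 statements merged into one kernel-verified Lean document; each statement's English description precedes it below -/
import Mathlib

section
/- Let M be a module of a graph G that can be partitioned into two sets M₁ and M₂ with no edges between M₁ and M₂. Let A be an independent set of G, let B₁ be an independent set with A TAR_k-reachable to B₁ maximizing |B₁ ∩ M₁| among all TAR_k-reachable sets, and let B₂ be any independent set with A TAR_k-reachable to B₂. Then there exists an independent set C of G with A TAR_k-reachable to C, C ∩ M₁ = B₁ ∩ M₁, and C ∩ M₂ = B₂ ∩ M₂. -/
/-!
Write `N(M)` for the vertices outside `M` with a neighbour in `M`. Since `M` is a module, each of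
them sees all of `M`, so an independent set meeting `N(M)` avoids `M`.

Follow a reconfiguration sequence from `B₁` to `B₂`. For a set `I` of it avoiding `N(M)`, replace
`I ∩ M₁` by `B₁ ∩ M₁`: the result `graft M₁ B₁ I` is independent (nothing in `I \ M₁` sees `M₁`)
and, by the maximality of `|B₁ ∩ M₁|`, no smaller than `I`. Hence one step between two such sets
becomes at most one step between their grafts, while after a stretch of sets meeting `N(M)`, which
avoid `M`, the graft is reached from the set itself by adding `B₁ ∩ M₁` token by token. During such
a stretch the trace on `M₂` is empty, so the set `C` found before the stretch still works.
-/

open Finset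

variable {V : Type*}

/-- `I` is an independent set of `G`. -/
def IsIndep (G : SimpleGraph V) (I : Finset V) : Prop :=
  ∀ u ∈ I, ∀ v ∈ I, ¬ G.Adj u v

/-- One token addition or removal between independent sets of size at least `k`. -/
def TarStep [DecidableEq V] (G : SimpleGraph V) (k : ℕ) (I J : Finset V) : Prop :=
  IsIndep G I ∧ IsIndep G J ∧ k ≤ I.card ∧ k ≤ J.card ∧
    ∃ v : V, J = insert v I ∨ I = insert v J

/-- TAR-reachability with token lower bound `k`. -/
def TarReach [DecidableEq V] (G : SimpleGraph V) (k : ℕ) (I J : Finset V) : Prop :=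
  Relation.ReflTransGen (TarStep G k) I J

/-- TAR-reachability inside the subgraph of `G` induced by `S`. -/
def TarReachOn [DecidableEq V] (G : SimpleGraph V) (S : Finset V) (k : ℕ)
    (I J : Finset V) : Prop :=
  Relation.ReflTransGen (fun I J => I ⊆ S ∧ J ⊆ S ∧ TarStep G k I J) I J

/-- `M` is a module of `G`: every vertex outside `M` is adjacent to all of `M`
or to none of `M`. -/
def IsModule (G : SimpleGraph V) (M : Finset V) : Prop :=
  ∀ v ∉ M, (∀ u ∈ M, G.Adj v u) ∨ (∀ u ∈ M, ¬ G.Adj v u)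

section Graft

variable {α : Type*} [DecidableEq α] {P Q S I : Finset α} {v : α}

def graft (P S I : Finset α) : Finset α := I \ P ∪ S ∩ P

lemma graft_self (P S : Finset α) : graft P S S = S := sdiff_union_inter S P

lemma graft_inter_self : graft P S I ∩ P = S ∩ P := by
  ext
  simp only [graft, mem_inter, mem_union, mem_sdiff]
  tauto

lemma graft_inter_of_disjoint (h : Disjoint P Q) : graft P S I ∩ Q = I ∩ Q := by
  ext x
  have := @disjoint_left.mp h x
  simp only [graft, mem_inter, mem_union, mem_sdiff]
  tauto

lemma graft_of_disjoint (h : Disjoint I P) : graft P S I = I ∪ S ∩ P := by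
  rw [graft, sdiff_eq_self_of_disjoint h]

lemma graft_insert_of_mem (hv : v ∈ P) : graft P S (insert v I) = graft P S I := by
  rw [graft, graft, insert_sdiff_of_mem I hv]

lemma graft_insert_of_notMem (hv : v ∉ P) :
    graft P S (insert v I) = insert v (graft P S I) := by
  rw [graft, graft, insert_sdiff_of_notMem I hv, insert_union]

lemma card_graft_add_card_inter : #(graft P S I) + #(I ∩ P) = #I + #(S ∩ P) := by
  rw [graft, card_union_of_disjoint (sdiff_disjoint.mono_right inter_subset_right),
    ← card_sdiff_add_card_inter I P]
  ring

end Graft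

section Neighborhood

variable {G : SimpleGraph V} {M I J : Finset V}

lemma IsIndep.mono (h : IsIndep G J) (hIJ : I ⊆ J) : IsIndep G I :=
  fun u hu v hv => h u (hIJ hu) v (hIJ hv)

def MeetsNeighborhood (G : SimpleGraph V) (M I : Finset V) : Prop :=
  ∃ z ∈ I, z ∉ M ∧ ∃ u ∈ M, G.Adj z u

lemma MeetsNeighborhood.mono (h : MeetsNeighborhood G M I) (hIJ : I ⊆ J) :
    MeetsNeighborhood G M J := by
  obtain ⟨z, hz, hzM, hadj⟩ := h
  exact ⟨z, hIJ hz, hzM, hadj⟩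

lemma IsModule.disjoint_of_meetsNeighborhood (hM : IsModule G M) (hI : IsIndep G I)
    (h : MeetsNeighborhood G M I) : Disjoint I M := by
  obtain ⟨z, hz, hzM, u, hu, hzu⟩ := h
  have hzall : ∀ w ∈ M, G.Adj z w := (hM z hzM).resolve_right fun hnone => hnone u hu hzu
  exact disjoint_left.mpr fun w hw hwM => hI z hz w hw (hzall w hwM)

end Neighborhood

section Reconfiguration

variable [DecidableEq V] {G : SimpleGraph V} {k : ℕ} {M P Q A S I J : Finset V}

lemma TarStep.isIndep_left (h : TarStep G k I J) : IsIndep G I := h.1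

lemma TarStep.isIndep_right (h : TarStep G k I J) : IsIndep G J := h.2.1

lemma TarStep.le_card_left (h : TarStep G k I J) : k ≤ #I := h.2.2.1

lemma TarStep.le_card_right (h : TarStep G k I J) : k ≤ #J := h.2.2.2.1

lemma TarStep.symm (h : TarStep G k I J) : TarStep G k J I := by
  obtain ⟨hI, hJ, hkI, hkJ, v, hv⟩ := h
  exact ⟨hJ, hI, hkJ, hkI, v, hv.symm⟩

lemma TarStep.subset_or_subset (h : TarStep G k I J) : I ⊆ J ∨ J ⊆ I := by
  obtain ⟨-, -, -, -, v, rfl | rfl⟩ := h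
  exacts [.inl (subset_insert v I), .inr (subset_insert v J)]

lemma TarReach.symm (h : TarReach G k I J) : TarReach G k J I := by
  induction h with
  | refl => exact .refl
  | tail _ hstep ih => exact .head hstep.symm ih

lemma TarReach.trans (hIJ : TarReach G k I J) (hJS : TarReach G k J S) : TarReach G k I S :=
  Relation.ReflTransGen.trans hIJ hJS

lemma TarReach.isIndep (hA : IsIndep G A) (h : TarReach G k A I) : IsIndep G I := by
  induction h with
  | refl => exact hA
  | tail _ hstep _ => exact hstep.isIndep_right

lemma tarReach_union (hind : IsIndep G (I ∪ S)) (hk : k ≤ #I) : TarReach G k I (I ∪ S) := by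
  induction S using Finset.induction_on with
  | empty => rw [union_empty]; exact .refl
  | @insert a S _ ih =>
    have hsub : I ∪ S ⊆ I ∪ insert a S := union_subset_union_right (subset_insert a S)
    have hk' : k ≤ #(I ∪ S) := hk.trans (card_le_card subset_union_left)
    refine (ih (hind.mono hsub)).tail ⟨hind.mono hsub, hind, hk', hk'.trans (card_le_card hsub),
      a, .inl ?_⟩
    rw [union_insert]

lemma isIndep_graft (hI : IsIndep G I) (hS : IsIndep G S)
    (hIS : ∀ x ∈ I \ P, ∀ y ∈ S ∩ P, ¬ G.Adj x y) : IsIndep G (graft P S I) := by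
  intro x hx y hy
  rcases mem_union.mp hx with hx | hx <;> rcases mem_union.mp hy with hy | hy
  · exact hI x (mem_sdiff.mp hx).1 y (mem_sdiff.mp hy).1
  · exact hIS x hx y hy
  · exact fun h => hIS y hy x hx h.symm
  · exact hS x (mem_inter.mp hx).1 y (mem_inter.mp hy).1

lemma TarStep.tarReach_graft (h : TarStep G k I J) (hI : IsIndep G (graft P S I))
    (hJ : IsIndep G (graft P S J)) (hkI : k ≤ #(graft P S I)) (hkJ : k ≤ #(graft P S J)) :
    TarReach G k (graft P S I) (graft P S J) := by
  obtain ⟨-, -, -, -, v, hv⟩ := h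
  by_cases hvP : v ∈ P
  · rcases hv with rfl | rfl <;> rw [graft_insert_of_mem hvP] <;> exact .refl
  · refine .single ⟨hI, hJ, hkI, hkJ, v, ?_⟩
    rcases hv with rfl | rfl <;> simp only [graft_insert_of_notMem hvP, true_or, or_true]

lemma TarStep.disjoint_of_meetsNeighborhood (hM : IsModule G M) (h : TarStep G k I J)
    (hJ : MeetsNeighborhood G M J) : Disjoint I M := by
  rcases h.subset_or_subset with hIJ | hJI
  · exact (hM.disjoint_of_meetsNeighborhood h.isIndep_right hJ).mono_left hIJ
  · exact hM.disjoint_of_meetsNeighborhood h.isIndep_left (hJ.mono hJI)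

lemma isIndep_graft_of_not_meetsNeighborhood (hpart : P ∪ Q = M)
    (hsep : ∀ a ∈ P, ∀ b ∈ Q, ¬ G.Adj a b) (hI : IsIndep G I) (hS : IsIndep G S)
    (hN : ¬ MeetsNeighborhood G M I) : IsIndep G (graft P S I) := by
  refine isIndep_graft hI hS fun x hx y hy hxy => ?_
  obtain ⟨hxI, hxP⟩ := mem_sdiff.mp hx
  obtain ⟨-, hyP⟩ := mem_inter.mp hy
  by_cases hxM : x ∈ M
  · rw [← hpart, mem_union, or_iff_right hxP] at hxM
    exact hsep y hyP x hxM hxy.symm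
  · exact hN ⟨x, hxI, hxM, y, hpart ▸ mem_union_left Q hyP, hxy⟩

lemma tarReach_graft_of_not_meetsNeighborhood (hM : IsModule G M) (hpart : P ∪ Q = M)
    (hsep : ∀ a ∈ P, ∀ b ∈ Q, ¬ G.Adj a b) {B : Finset V} (hA : IsIndep G A)
    (hB : TarReach G k A B) (hmax : ∀ J, TarReach G k A J → #(J ∩ P) ≤ #(B ∩ P))
    (hpath : TarReach G k B I) (hI : ¬ MeetsNeighborhood G M I) :
    TarReach G k A (graft P B I) := by
  have hBind : IsIndep G B := hB.isIndep hA
  have hcard (J : Finset V) (hJ : TarReach G k A J) : #J ≤ #(graft P B J) := by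
    have := hmax J hJ
    have := card_graft_add_card_inter (P := P) (S := B) (I := J)
    omega
  have hind (J : Finset V) (hJ : IsIndep G J) (hN : ¬ MeetsNeighborhood G M J) :
      IsIndep G (graft P B J) :=
    isIndep_graft_of_not_meetsNeighborhood hpart hsep hJ hBind hN
  induction hpath with
  | refl => rwa [graft_self]
  | @tail J J' hpath hstep ih =>
    have hJ'reach : TarReach G k A J' := hB.trans (hpath.tail hstep)
    by_cases hJ : MeetsNeighborhood G M J
    · have hJ'P : Disjoint J' P := (hstep.symm.disjoint_of_meetsNeighborhood hM hJ).mono_right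
        (hpart ▸ subset_union_left)
      rw [graft_of_disjoint hJ'P]
      exact hJ'reach.trans (tarReach_union
        (graft_of_disjoint hJ'P ▸ hind J' hstep.isIndep_right hI) hstep.le_card_right)
    · have hkJ : k ≤ #(graft P B J) := hstep.le_card_left.trans (hcard J (hB.trans hpath))
      have hkJ' : k ≤ #(graft P B J') := hstep.le_card_right.trans (hcard J' hJ'reach)
      exact (ih hJ).trans (hstep.tarReach_graft (hind J hstep.isIndep_left hJ)
        (hind J' hstep.isIndep_right hI) hkJ hkJ')

end Reconfiguration

/-- Module Lemma B. -/
theorem module_lemma_B [DecidableEq V] (G : SimpleGraph V) (M M₁ M₂ : Finset V)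
    (hM : IsModule G M) (hpart : M₁ ∪ M₂ = M) (hdisj : Disjoint M₁ M₂)
    (hsep : ∀ a ∈ M₁, ∀ b ∈ M₂, ¬ G.Adj a b)
    (k : ℕ) (A : Finset V) (hA : IsIndep G A)
    (B₁ : Finset V) (hB₁ : TarReach G k A B₁)
    (hmax : ∀ B : Finset V, TarReach G k A B → (B ∩ M₁).card ≤ (B₁ ∩ M₁).card)
    (B₂ : Finset V) (hB₂ : TarReach G k A B₂) :
    ∃ C : Finset V, TarReach G k A C ∧ C ∩ M₁ = B₁ ∩ M₁ ∧ C ∩ M₂ = B₂ ∩ M₂ := by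
  have hpath : TarReach G k B₁ B₂ := hB₁.symm.trans hB₂
  clear hB₂
  induction hpath with
  | refl => exact ⟨B₁, hB₁, rfl, rfl⟩
  | @tail I J hpath hstep ih =>
    by_cases hJ : MeetsNeighborhood G M J
    · obtain ⟨C, hC, hC₁, hC₂⟩ := ih
      have hIM₂ : Disjoint I M₂ := (hstep.disjoint_of_meetsNeighborhood hM hJ).mono_right
        (hpart ▸ subset_union_right)
      have hJM₂ : Disjoint J M₂ :=
        (hM.disjoint_of_meetsNeighborhood hstep.isIndep_right hJ).mono_right
          (hpart ▸ subset_union_right)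
      refine ⟨C, hC, hC₁, ?_⟩
      rw [hC₂, disjoint_iff_inter_eq_empty.mp hIM₂, disjoint_iff_inter_eq_empty.mp hJM₂]
    · exact ⟨graft M₁ B₁ J,
        tarReach_graft_of_not_meetsNeighborhood hM hpart hsep hA hB₁ hmax (hpath.tail hstep) hJ,
        graft_inter_self, graft_inter_of_disjoint hdisj⟩
end

section
/- Let G be the complete join of graphs G_v and G_w, and let I be an independent set of G with I ∩ V(G_w) = ∅. Then for every ℓ ≥ 1 with ℓ ≤ |I|, the maximum size of an independent set of G that is TAR_ℓ-reachable from I equals the maximum size of an independent set of G_v that is TAR_ℓ-reachable (in G_v) from I. -/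
open Finset

variable {V : Type*}

/-- The maximum size of an independent set of `G` that is TAR_k-reachable from `I`. -/
noncomputable def RIS [DecidableEq V] (G : SimpleGraph V) (k : ℕ) (I : Finset V) : ℕ :=
  sSup {m | ∃ J : Finset V, TarReach G k I J ∧ J.card = m}

/-- The maximum size of an independent set TAR_k-reachable from `I` inside the
subgraph of `G` induced by `S`. -/
noncomputable def RISOn [DecidableEq V] (G : SimpleGraph V) (S : Finset V) (k : ℕ)
    (I : Finset V) : ℕ :=
  sSup {m | ∃ J : Finset V, TarReachOn G S k I J ∧ J.card = m}

/-! Since `ℓ ≥ 1`, every set along a TAR_ℓ-sequence is nonempty. A token added to a nonempty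
set inside `S` must itself lie in `S`, as every vertex outside `S` is adjacent to all of `S`;
so sequences starting inside `S` never leave `S`, and reachability in `G` and in `G[S]` agree. -/

section Join

variable [DecidableEq V] {G : SimpleGraph V} {S : Finset V} {k : ℕ}

theorem IsIndep.mem_of_join (hjoin : ∀ a ∈ S, ∀ b ∉ S, G.Adj a b) {B : Finset V} {a v : V}
    (hB : IsIndep G (insert v B)) (ha : a ∈ B) (haS : a ∈ S) : v ∈ S := by
  by_contra hv
  exact hB v (mem_insert_self v B) a (mem_insert_of_mem ha) (hjoin a haS v hv).symm

theorem TarStep.subset_of_join (hjoin : ∀ a ∈ S, ∀ b ∉ S, G.Adj a b) (hk : 1 ≤ k)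
    {B C : Finset V} (h : TarStep G k B C) (hB : B ⊆ S) : C ⊆ S := by
  obtain ⟨-, hC, hBk, -, v, rfl | rfl⟩ := h
  · obtain ⟨a, ha⟩ := card_pos.mp (hk.trans hBk)
    exact insert_subset (hC.mem_of_join hjoin ha (hB ha)) hB
  · exact (subset_insert v C).trans hB

theorem TarReachOn.subset {I J : Finset V} (h : TarReachOn G S k I J) (hI : I ⊆ S) :
    J ⊆ S := by
  induction h with
  | refl => exact hI
  | tail _ hstep _ => exact hstep.2.1

theorem TarReachOn.tarReach {I J : Finset V} (h : TarReachOn G S k I J) : TarReach G k I J :=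
  Relation.ReflTransGen.mono (fun _ _ hstep => hstep.2.2) _ _ h

theorem TarReach.tarReachOn_of_join (hjoin : ∀ a ∈ S, ∀ b ∉ S, G.Adj a b) (hk : 1 ≤ k)
    {I J : Finset V} (h : TarReach G k I J) (hI : I ⊆ S) : TarReachOn G S k I J := by
  induction h with
  | refl => exact .refl
  | tail _ hstep ih =>
    have hB := ih.subset hI
    exact ih.tail ⟨hB, hstep.subset_of_join hjoin hk hB, hstep⟩

theorem tarReach_iff_tarReachOn_of_join (hjoin : ∀ a ∈ S, ∀ b ∉ S, G.Adj a b) (hk : 1 ≤ k)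
    {I J : Finset V} (hI : I ⊆ S) : TarReach G k I J ↔ TarReachOn G S k I J :=
  ⟨fun h => h.tarReachOn_of_join hjoin hk hI, TarReachOn.tarReach⟩

end Join

theorem ris_join_general [DecidableEq V] (G : SimpleGraph V) (S : Finset V)
    (hjoin : ∀ a ∈ S, ∀ b ∉ S, G.Adj a b)
    (I : Finset V) (hIS : I ⊆ S)
    (ℓ : ℕ) (hℓ1 : 1 ≤ ℓ) :
    RIS G ℓ I = RISOn G S ℓ I := by
  simp only [RIS, RISOn, tarReach_iff_tarReachOn_of_join hjoin hℓ1 hIS]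

/-- If `G` is the complete join of `G[S]` and `G[Sᶜ]` and the independent set
`I` lies inside `S`, then for `1 ≤ ℓ ≤ |I|` the maximum size of an independent
set TAR_ℓ-reachable from `I` in `G` equals the one reachable inside `G[S]`. -/
theorem ris_join [Fintype V] [DecidableEq V] (G : SimpleGraph V) (S : Finset V)
    (hjoin : ∀ a ∈ S, ∀ b ∉ S, G.Adj a b)
    (I : Finset V) (hI : IsIndep G I) (hIS : I ⊆ S)
    (ℓ : ℕ) (hℓ1 : 1 ≤ ℓ) (hℓ : ℓ ≤ I.card) :
    RIS G ℓ I = RISOn G S ℓ I :=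
  ris_join_general G S hjoin I hIS ℓ hℓ1
end
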